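/- arXiv:2407.08100 — 7 statements merged into one kernel-verified Lean document; each statement's English description precedes it below -/
import Mathlib

section
/- Let γ: ℕ → ℝ, X: ℕ → ℝ, and Θ: ℕ₀ → ℝ satisfy Θ_n = Θ_{n-1} - γ_n(Θ_{n-1} - X_n) for all n ≥ 1, and let δ ∈ ℕ, c ∈ (0,∞) be such that for all n ≥ δ with min_{m ∈ {1,...,δ}} |Θ_{n-m}| ≥ c it holds that 0 ≤ γ_n ≤ 1 and |X_n| ≤ c. Then sup_{n ∈ ℕ₀} |Θ_n| ≤ (1 + sup_{n ∈ ℕ} |γ_n|)^δ · (max{c, |Θ_0|} + sup_{n ∈ ℕ} |X_n|). -/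
open scoped ENNReal

/-!
Away from the region `|Θ| < c`, the hypothesis makes each step a convex combination of the
previous iterate and a data point of size at most `c`, so `|Θ|` cannot grow beyond
`max c |Θ 0|` there. Every other step is controlled by the crude bound
`|Θₙ| + S ≤ (1 + G) (|Θₙ₋₁| + S)`, with `G` and `S` the suprema of `|γ|` and `|X|`, and a
run of such steps has length at most `δ`: it starts either at time `0` or within `δ` steps
after an iterate with `|Θ| < c`. Working in `ℝ≥0∞` makes infinite suprema harmless.
-/

theorem le_pow_mul_of_le_mul_succ {M : Type*} [Monoid M] [Preorder M] [MulLeftMono M]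
    {u : ℕ → M} {a : M} (h : ∀ i, u (i + 1) ≤ a * u i) (k j : ℕ) :
    u (k + j) ≤ a ^ j * u k := by
  induction j with
  | zero => simp
  | succ j ih =>
    calc u (k + j + 1) ≤ a * u (k + j) := h _
      _ ≤ a * (a ^ j * u k) := mul_le_mul_right ih a
      _ = a ^ (j + 1) * u k := by rw [pow_succ', mul_assoc]

theorem abs_sub_mul_sub_le (θ γ x : ℝ) :
    |θ - γ * (θ - x)| ≤ (1 + |γ|) * |θ| + |γ| * |x| := by
  calc |θ - γ * (θ - x)| = |θ + (-γ * θ + γ * x)| := by ring_nf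
    _ ≤ |θ| + (|-γ * θ| + |γ * x|) := (abs_add_le _ _).trans (by gcongr; exact abs_add_le _ _)
    _ = (1 + |γ|) * |θ| + |γ| * |x| := by rw [abs_mul, abs_mul, abs_neg]; ring

theorem abs_sub_mul_sub_le_max {θ γ x c : ℝ} (hγ₀ : 0 ≤ γ) (hγ₁ : γ ≤ 1) (hx : |x| ≤ c) :
    |θ - γ * (θ - x)| ≤ max |θ| c := by
  have hγ₁' : 0 ≤ 1 - γ := sub_nonneg.mpr hγ₁
  calc |θ - γ * (θ - x)| = |(1 - γ) * θ + γ * x| := by ring_nf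
    _ ≤ (1 - γ) * |θ| + γ * |x| := by
      refine (abs_add_le _ _).trans_eq ?_
      rw [abs_mul, abs_mul, abs_of_nonneg hγ₁', abs_of_nonneg hγ₀]
    _ ≤ (1 - γ) * max |θ| c + γ * max |θ| c := by
      gcongr
      exacts [le_max_left _ _, hx.trans (le_max_right _ _)]
    _ = max |θ| c := by ring

theorem ofReal_abs_sub_mul_sub_add_le {θ γ x : ℝ} {G S : ℝ≥0∞}
    (hγ : ENNReal.ofReal |γ| ≤ G) (hx : ENNReal.ofReal |x| ≤ S) :
    ENNReal.ofReal |θ - γ * (θ - x)| + S ≤ (1 + G) * (ENNReal.ofReal |θ| + S) := by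
  calc ENNReal.ofReal |θ - γ * (θ - x)| + S
      ≤ ENNReal.ofReal ((1 + |γ|) * |θ| + |γ| * |x|) + S := by
        gcongr; exact abs_sub_mul_sub_le θ γ x
    _ = (1 + ENNReal.ofReal |γ|) * ENNReal.ofReal |θ|
          + ENNReal.ofReal |γ| * ENNReal.ofReal |x| + S := by
        rw [ENNReal.ofReal_add (by positivity) (by positivity), ENNReal.ofReal_mul (by positivity),
          ENNReal.ofReal_mul (by positivity), ENNReal.ofReal_add zero_le_one (by positivity),
          ENNReal.ofReal_one]
    _ ≤ (1 + G) * ENNReal.ofReal |θ| + G * S + S := by gcongr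
    _ = (1 + G) * (ENNReal.ofReal |θ| + S) := by ring

theorem ofReal_abs_le_of_sub_mul_sub (γ X Θ : ℕ → ℝ) (δ : ℕ) (c : ℝ) {G S : ℝ≥0∞}
    (hγ : ∀ n, ENNReal.ofReal |γ (n + 1)| ≤ G) (hX : ∀ n, ENNReal.ofReal |X (n + 1)| ≤ S)
    (hrec : ∀ n, 1 ≤ n → Θ n = Θ (n - 1) - γ n * (Θ (n - 1) - X n))
    (hcond : ∀ n, δ ≤ n → (∀ m, 1 ≤ m → m ≤ δ → c ≤ |Θ (n - m)|) →
      0 ≤ γ n ∧ γ n ≤ 1 ∧ |X n| ≤ c) (n : ℕ) :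
    ENNReal.ofReal |Θ n| ≤ (1 + G) ^ δ * (ENNReal.ofReal (max c |Θ 0|) + S) := by
  set K := max c |Θ 0|
  set B := (1 + G) ^ δ * (ENNReal.ofReal K + S)
  have hG : 1 ≤ 1 + G := le_self_add
  have hKB : ENNReal.ofReal K ≤ B := le_self_add.trans (le_mul_of_one_le_left' (one_le_pow₀ hG))
  have hstep : ∀ i, ENNReal.ofReal |Θ (i + 1)| + S ≤ (1 + G) * (ENNReal.ofReal |Θ i| + S) := by
    intro i
    rw [hrec (i + 1) i.succ_pos, Nat.add_sub_cancel]
    exact ofReal_abs_sub_mul_sub_add_le (hγ i) (hX i)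
  have hrun : ∀ k j, j ≤ δ → |Θ k| ≤ K → ENNReal.ofReal |Θ (k + j)| ≤ B := by
    intro k j hjδ hΘk
    calc ENNReal.ofReal |Θ (k + j)|
        ≤ ENNReal.ofReal |Θ (k + j)| + S := le_self_add
      _ ≤ (1 + G) ^ j * (ENNReal.ofReal |Θ k| + S) :=
        le_pow_mul_of_le_mul_succ (u := fun i ↦ ENNReal.ofReal |Θ i| + S) hstep k j
      _ ≤ (1 + G) ^ δ * (ENNReal.ofReal K + S) := by gcongr
  induction n using Nat.strong_induction_on with
  | _ n ih =>
  rcases le_or_gt n δ with hnδ | hδn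
  · simpa using hrun 0 n hnδ (le_max_right _ _)
  by_cases hsmall : ∃ m, 1 ≤ m ∧ m ≤ δ ∧ |Θ (n - m)| < c
  · obtain ⟨m, -, hmδ, hΘ⟩ := hsmall
    simpa [Nat.sub_add_cancel (hmδ.trans hδn.le)] using
      hrun (n - m) m hmδ (hΘ.le.trans (le_max_left _ _))
  push Not at hsmall
  obtain ⟨hγ₀, hγ₁, hXc⟩ := hcond n hδn.le hsmall
  have hconvex := abs_sub_mul_sub_le_max (θ := Θ (n - 1)) hγ₀ hγ₁ hXc
  rw [← hrec n (by omega)] at hconvex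
  calc ENNReal.ofReal |Θ n| ≤ max (ENNReal.ofReal |Θ (n - 1)|) (ENNReal.ofReal c) := by
        rw [← ENNReal.ofReal_max]; exact ENNReal.ofReal_le_ofReal hconvex
    _ ≤ B := max_le (ih (n - 1) (by omega))
        ((ENNReal.ofReal_le_ofReal (le_max_left _ _)).trans hKB)

theorem stmt0_general (γ X : ℕ → ℝ) (Θ : ℕ → ℝ) (δ : ℕ) (c : ℝ)
    (hrec : ∀ n, 1 ≤ n → Θ n = Θ (n - 1) - γ n * (Θ (n - 1) - X n))
    (hcond : ∀ n, δ ≤ n → (∀ m, 1 ≤ m → m ≤ δ → c ≤ |Θ (n - m)|) →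
      0 ≤ γ n ∧ γ n ≤ 1 ∧ |X n| ≤ c) :
    ⨆ n : ℕ, ENNReal.ofReal |Θ n| ≤
      (1 + ⨆ n : ℕ, ENNReal.ofReal |γ (n + 1)|) ^ δ *
        (ENNReal.ofReal (max c |Θ 0|) + ⨆ n : ℕ, ENNReal.ofReal |X (n + 1)|) :=
  iSup_le <| ofReal_abs_le_of_sub_mul_sub γ X Θ δ c
    (le_iSup (fun n ↦ ENNReal.ofReal |γ (n + 1)|)) (le_iSup (fun n ↦ ENNReal.ofReal |X (n + 1)|))
    hrec hcond

theorem stmt0 (γ X : ℕ → ℝ) (Θ : ℕ → ℝ) (δ : ℕ) (c : ℝ)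
    (hδ : 1 ≤ δ) (hc : 0 < c)
    (hrec : ∀ n, 1 ≤ n → Θ n = Θ (n - 1) - γ n * (Θ (n - 1) - X n))
    (hcond : ∀ n, δ ≤ n → (∀ m, 1 ≤ m → m ≤ δ → c ≤ |Θ (n - m)|) →
      0 ≤ γ n ∧ γ n ≤ 1 ∧ |X n| ≤ c) :
    ⨆ n : ℕ, ENNReal.ofReal |Θ n| ≤
      (1 + ⨆ n : ℕ, ENNReal.ofReal |γ (n + 1)|) ^ δ *
        (ENNReal.ofReal (max c |Θ 0|) + ⨆ n : ℕ, ENNReal.ofReal |X (n + 1)|) :=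
  stmt0_general γ X Θ δ c hrec hcond
end

section
/- Let ε ∈ (0,∞), r ∈ [0,∞), and let X be a bounded real-valued random variable on a probability space (Ω, 𝓕, ℙ). Then E[|X| / (ε + √(X² + r))] < ∞ and Var(X / (ε + √(X² + r))) ≥ ε²·Var(X) / (ε + (r + sup_{ω ∈ Ω} |X(ω)|²)^{1/2})⁴. -/
/-!
Write `g x = x / (ε + √(x ^ 2 + r))`. For `a ^ 2, b ^ 2 ≤ S`, putting `g a - g b` over a common
denominator gives `ε (a - b)` plus a term of the sign of `a - b` (since `x ↦ x / √(x ^ 2 + r)` is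
monotone), over a denominator at most `(ε + √(r + S)) ^ 2`. Hence
`(g a - g b) ^ 2 ≥ ε ^ 2 (a - b) ^ 2 / (ε + √(r + S)) ^ 4`, and integrating this over two independent
copies of `X`, with `E[(Z - Z') ^ 2] = 2 Var Z`, gives the variance bound. Integrability is clear
since `|g| ≤ 1`.
-/

open MeasureTheory ProbabilityTheory

lemma mul_sqrt_le_mul_sqrt_of_nonneg {r a b : ℝ} (hr : 0 ≤ r) (ha : 0 ≤ a) (hab : a ≤ b) :
    a * √(b ^ 2 + r) ≤ b * √(a ^ 2 + r) := by
  have hb : 0 ≤ b := ha.trans hab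
  rw [← sq_le_sq₀ (by positivity) (by positivity), mul_pow, mul_pow,
    Real.sq_sqrt (by positivity), Real.sq_sqrt (by positivity)]
  nlinarith [mul_le_mul_of_nonneg_right (mul_self_le_mul_self ha hab) hr]

lemma mul_sqrt_le_mul_sqrt {r a b : ℝ} (hr : 0 ≤ r) (hab : a ≤ b) :
    a * √(b ^ 2 + r) ≤ b * √(a ^ 2 + r) := by
  rcases le_total 0 a with ha | ha
  · exact mul_sqrt_le_mul_sqrt_of_nonneg hr ha hab
  rcases le_total b 0 with hb | hb
  · have := mul_sqrt_le_mul_sqrt_of_nonneg hr (neg_nonneg.2 hb) (neg_le_neg hab)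
    simp only [neg_sq] at this
    linarith
  · exact (mul_nonpos_of_nonpos_of_nonneg ha (Real.sqrt_nonneg _)).trans
      (mul_nonneg hb (Real.sqrt_nonneg _))

lemma mul_sqrt_sub_mul_sqrt_mul_sub_nonneg {r : ℝ} (hr : 0 ≤ r) (a b : ℝ) :
    0 ≤ (a * √(b ^ 2 + r) - b * √(a ^ 2 + r)) * (a - b) := by
  rcases le_total a b with hab | hba
  · exact mul_nonneg_of_nonpos_of_nonpos (sub_nonpos.2 (mul_sqrt_le_mul_sqrt hr hab))
      (sub_nonpos.2 hab)
  · exact mul_nonneg (sub_nonneg.2 (mul_sqrt_le_mul_sqrt hr hba)) (sub_nonneg.2 hba)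

lemma abs_div_add_sqrt_le_one {ε r : ℝ} (hε : 0 < ε) (hr : 0 ≤ r) (x : ℝ) :
    |x / (ε + √(x ^ 2 + r))| ≤ 1 := by
  have hx : |x| ≤ √(x ^ 2 + r) := Real.abs_le_sqrt (le_add_of_nonneg_right hr)
  rw [abs_div, abs_of_pos (show 0 < ε + √(x ^ 2 + r) by positivity)]
  exact div_le_one_of_le₀ (by linarith) (by positivity)

lemma mul_sq_sub_le_div_add_sqrt_sub_mul_sub {ε r S a b : ℝ} (hε : 0 < ε) (hr : 0 ≤ r)
    (ha : a ^ 2 ≤ S) (hb : b ^ 2 ≤ S) :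
    ε / (ε + √(r + S)) ^ 2 * (a - b) ^ 2 ≤
      (a / (ε + √(a ^ 2 + r)) - b / (ε + √(b ^ 2 + r))) * (a - b) := by
  have hsa : √(a ^ 2 + r) ≤ √(r + S) := Real.sqrt_le_sqrt (by linarith)
  have hsb : √(b ^ 2 + r) ≤ √(r + S) := Real.sqrt_le_sqrt (by linarith)
  have hDa : 0 < ε + √(a ^ 2 + r) := by positivity
  have hDb : 0 < ε + √(b ^ 2 + r) := by positivity
  calc ε / (ε + √(r + S)) ^ 2 * (a - b) ^ 2
      ≤ ε * (a - b) ^ 2 / ((ε + √(a ^ 2 + r)) * (ε + √(b ^ 2 + r))) := by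
        rw [div_mul_eq_mul_div]
        refine div_le_div_of_nonneg_left (by positivity) (by positivity) ?_
        rw [sq (ε + √(r + S))]
        exact mul_le_mul (by linarith) (by linarith) hDb.le (by positivity)
    _ ≤ (ε * (a - b) ^ 2 + (a * √(b ^ 2 + r) - b * √(a ^ 2 + r)) * (a - b)) /
          ((ε + √(a ^ 2 + r)) * (ε + √(b ^ 2 + r))) := by
        gcongr
        exact le_add_of_nonneg_right (mul_sqrt_sub_mul_sqrt_mul_sub_nonneg hr a b)
    _ = (a / (ε + √(a ^ 2 + r)) - b / (ε + √(b ^ 2 + r))) * (a - b) := by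
        field_simp
        ring

lemma sq_mul_sq_le_sq_of_mul_sq_le {c d u : ℝ} (hc : 0 ≤ c) (h : c * d ^ 2 ≤ u * d) :
    c ^ 2 * d ^ 2 ≤ u ^ 2 := by
  nlinarith [sq_nonneg (u - c * d), mul_le_mul_of_nonneg_left h hc]

section Variance

variable {Ω : Type*} [MeasurableSpace Ω] {μ : Measure Ω} [IsProbabilityMeasure μ]

lemma integral_prod_sub_sq_eq_two_mul_variance {X : Ω → ℝ} (hX : MemLp X 2 μ) :
    ∫ p, (X p.1 - X p.2) ^ 2 ∂(μ.prod μ) = 2 * Var[X; μ] := by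
  have hX1 := hX.integrable one_le_two
  have hmean : ∫ p, X p.1 - X p.2 ∂(μ.prod μ) = 0 := by
    rw [integral_sub (hX1.comp_fst μ) (hX1.comp_snd μ), integral_fun_fst, integral_fun_snd]
    simp
  have hvar := variance_add_prod hX hX.neg
  simp only [Pi.neg_apply, ← sub_eq_add_neg, variance_neg] at hvar
  rw [← variance_of_integral_eq_zero (by fun_prop) hmean, hvar, two_mul]

lemma mul_variance_le_variance_of_mul_sq_sub_le {X Y : Ω → ℝ} {c : ℝ} (hX : MemLp X 2 μ)
    (hY : MemLp Y 2 μ) (h : ∀ ω ω', c * (X ω - X ω') ^ 2 ≤ (Y ω - Y ω') ^ 2) :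
    c * Var[X; μ] ≤ Var[Y; μ] := by
  have hsq {Z : Ω → ℝ} (hZ : MemLp Z 2 μ) :
      Integrable (fun p : Ω × Ω => (Z p.1 - Z p.2) ^ 2) (μ.prod μ) :=
    ((hZ.comp_fst μ).sub (hZ.comp_snd μ)).integrable_sq
  have := integral_mono ((hsq hX).const_mul c) (hsq hY) fun p => h p.1 p.2
  rw [integral_const_mul, integral_prod_sub_sq_eq_two_mul_variance hX,
    integral_prod_sub_sq_eq_two_mul_variance hY] at this
  linarith

end Variance

theorem stmt3 {Ω : Type*} [MeasurableSpace Ω] (μ : Measure Ω) [IsProbabilityMeasure μ]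
    (ε r : ℝ) (hε : 0 < ε) (hr : 0 ≤ r)
    (X : Ω → ℝ) (hX : Measurable X) (hb : ∃ C : ℝ, ∀ ω, |X ω| ≤ C) :
    Integrable (fun ω => |X ω| / (ε + Real.sqrt ((X ω) ^ 2 + r))) μ ∧
    ε ^ 2 * variance X μ / (ε + Real.sqrt (r + ⨆ ω, |X ω| ^ 2)) ^ 4 ≤
      variance (fun ω => X ω / (ε + Real.sqrt ((X ω) ^ 2 + r))) μ := by
  obtain ⟨C, hC⟩ := hb
  have hY_meas : Measurable fun ω => X ω / (ε + √(X ω ^ 2 + r)) := by fun_prop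
  have hY_le (ω : Ω) : ‖X ω / (ε + √(X ω ^ 2 + r))‖ ≤ 1 := abs_div_add_sqrt_le_one hε hr (X ω)
  have hYL2 : MemLp (fun ω => X ω / (ε + √(X ω ^ 2 + r))) 2 μ :=
    .of_bound hY_meas.aestronglyMeasurable 1 (ae_of_all _ hY_le)
  refine ⟨?_, ?_⟩
  · refine (hYL2.integrable one_le_two).norm.congr (ae_of_all _ fun ω => ?_)
    dsimp only
    rw [Real.norm_eq_abs, abs_div, abs_of_pos (show 0 < ε + √(X ω ^ 2 + r) by positivity)]
  have hbdd : BddAbove (Set.range fun ω => |X ω| ^ 2) :=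
    ⟨C ^ 2, by rintro _ ⟨ω, rfl⟩; exact pow_le_pow_left₀ (abs_nonneg _) (hC ω) 2⟩
  have hXS (ω : Ω) : X ω ^ 2 ≤ ⨆ ω, |X ω| ^ 2 := by simpa only [sq_abs] using le_ciSup hbdd ω
  have hXL2 : MemLp X 2 μ := .of_bound hX.aestronglyMeasurable C (ae_of_all _ hC)
  calc ε ^ 2 * variance X μ / (ε + √(r + ⨆ ω, |X ω| ^ 2)) ^ 4
      = (ε / (ε + √(r + ⨆ ω, |X ω| ^ 2)) ^ 2) ^ 2 * variance X μ := by
        rw [div_pow, ← pow_mul]; ring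
    _ ≤ _ := mul_variance_le_variance_of_mul_sq_sub_le hXL2 hYL2 fun ω ω' =>
        sq_mul_sq_le_sq_of_mul_sq_le (by positivity)
          (mul_sq_sub_le_div_add_sqrt_sub_mul_sub hε hr (hXS ω) (hXS ω'))
end

section
/- Let (Ω, 𝓕, ℙ) be a probability space, (D, 𝓓) and (E, 𝓔) measurable spaces, Φ: D × E → [−∞,∞] measurable, 𝓖 ⊆ 𝓕 a sub-sigma-algebra, X: Ω → D 𝓖-measurable, Y: Ω → E a random variable with σ(Y) independent of 𝓖, and assume for all x ∈ D that min{E[max{Φ(x,Y),0}], E[max{−Φ(x,Y),0}]} < ∞. Define φ: D → [−∞,∞] by φ(x) = E[Φ(x,Y)] (improper expectation). Then φ is measurable, and for every A ∈ 𝓖 with min{E[max{Φ(X,Y),0}·1_A], E[max{−Φ(X,Y),0}·1_A]} < ∞ it holds that E[Φ(X,Y)·1_A] = E[φ(X)·1_A]; in particular φ(X) is a version of the (generalized) conditional expectation of Φ(X,Y) given 𝓖. -/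
open MeasureTheory ProbabilityTheory
open scoped ENNReal

/-- The positive part of an extended real number, as an element of `[0,∞]`. -/
noncomputable def epos (z : EReal) : ℝ≥0∞ :=
  if z = ⊤ then ⊤ else ENNReal.ofReal z.toReal

lemma epos_measurable : Measurable epos := by
  unfold epos
  exact Measurable.ite (measurableSet_eq) measurable_const
    (ENNReal.measurable_ofReal.comp measurable_ereal_toReal)

lemma coe_fin (a : ℝ≥0∞) (ha : a ≠ ⊤) : (a : EReal) = ((a.toReal : ℝ) : EReal) := by
  conv_lhs => rw [← ENNReal.ofReal_toReal ha]
  rw [EReal.coe_ennreal_ofReal]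
  norm_cast
  exact max_eq_left ENNReal.toReal_nonneg

lemma epos_real (r : ℝ) : epos r = ENNReal.ofReal r := by simp [epos]
lemma epos_top : epos ⊤ = ⊤ := by simp [epos]
lemma epos_bot : epos ⊥ = 0 := by simp [epos]

lemma epos_sub_pos (a b : ℝ≥0∞) (h : min a b < ⊤) :
    epos ((a : EReal) - (b : EReal)) = a - b := by
  by_cases ha : a = ⊤
  · have hb : b ≠ ⊤ := by
      intro hb; rw [ha, hb] at h; simp at h
    subst ha
    rw [EReal.coe_ennreal_top, coe_fin b hb, EReal.top_sub_coe, epos_top,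
      eq_comm, ENNReal.sub_eq_top_iff]
    exact ⟨rfl, hb⟩
  · by_cases hb : b = ⊤
    · subst hb
      rw [EReal.coe_ennreal_top, EReal.sub_top, epos_bot, eq_comm]
      exact tsub_eq_zero_of_le le_top
    · rw [coe_fin a ha, coe_fin b hb, ← EReal.coe_sub, epos_real,
        ENNReal.ofReal_sub _ ENNReal.toReal_nonneg,
        ENNReal.ofReal_toReal ha, ENNReal.ofReal_toReal hb]

lemma epos_sub_neg (a b : ℝ≥0∞) (h : min a b < ⊤) :
    epos (-((a : EReal) - (b : EReal))) = b - a := by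
  by_cases ha : a = ⊤
  · have hb : b ≠ ⊤ := by
      intro hb; rw [ha, hb] at h; simp at h
    subst ha
    rw [EReal.coe_ennreal_top, coe_fin b hb, EReal.top_sub_coe]
    rw [show -(⊤ : EReal) = ⊥ by simp, epos_bot, eq_comm]
    exact tsub_eq_zero_of_le le_top
  · by_cases hb : b = ⊤
    · subst hb
      rw [EReal.coe_ennreal_top, EReal.sub_top]
      rw [show -(⊥ : EReal) = ⊤ by simp, epos_top, eq_comm, ENNReal.sub_eq_top_iff]
      exact ⟨rfl, ha⟩
    · rw [coe_fin a ha, coe_fin b hb, ← EReal.coe_sub, ← EReal.coe_neg, neg_sub, epos_real,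
        ENNReal.ofReal_sub _ ENNReal.toReal_nonneg,
        ENNReal.ofReal_toReal ha, ENNReal.ofReal_toReal hb]

lemma esub_eq (a b : ℝ≥0∞) :
    (a : EReal) - (b : EReal) =
      if a = ⊤ then (if b = ⊤ then (⊥ : EReal) else ⊤)
      else if b = ⊤ then ⊥ else (((a.toReal - b.toReal : ℝ)) : EReal) := by
  by_cases ha : a = ⊤
  · by_cases hb : b = ⊤
    · subst ha; subst hb
      simp [EReal.coe_ennreal_top, EReal.sub_top]
    · subst ha
      rw [if_pos rfl, if_neg hb, EReal.coe_ennreal_top, coe_fin b hb, EReal.top_sub_coe]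
  · by_cases hb : b = ⊤
    · subst hb
      rw [if_neg ha, if_pos rfl, EReal.coe_ennreal_top, EReal.sub_top]
    · rw [if_neg ha, if_neg hb, coe_fin a ha, coe_fin b hb, ← EReal.coe_sub]

lemma ereal_cancel (a b m : ℝ≥0∞) (hm : m ≠ ⊤) (h : min a b < ⊤) :
    ((a + m : ℝ≥0∞) : EReal) - ((b + m : ℝ≥0∞) : EReal) = (a : EReal) - (b : EReal) := by
  by_cases ha : a = ⊤
  · have hb : b ≠ ⊤ := by
      intro hb; rw [ha, hb] at h; simp at h
    subst ha
    have hbm : b + m ≠ ⊤ := ENNReal.add_ne_top.mpr ⟨hb, hm⟩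
    rw [show (⊤:ℝ≥0∞) + m = ⊤ from by simp, EReal.coe_ennreal_top, coe_fin _ hbm, coe_fin b hb,
      EReal.top_sub_coe, EReal.top_sub_coe]
  · by_cases hb : b = ⊤
    · subst hb
      rw [show (⊤:ℝ≥0∞) + m = ⊤ from by simp, EReal.coe_ennreal_top, EReal.sub_top, EReal.sub_top]
    · have ham : a + m ≠ ⊤ := ENNReal.add_ne_top.mpr ⟨ha, hm⟩
      have hbm : b + m ≠ ⊤ := ENNReal.add_ne_top.mpr ⟨hb, hm⟩
      rw [coe_fin _ ham, coe_fin _ hbm, coe_fin a ha, coe_fin b hb,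
        ← EReal.coe_sub, ← EReal.coe_sub, ENNReal.toReal_add ha hm, ENNReal.toReal_add hb hm]
      norm_num

lemma lint_sub_eq {α : Type*} [MeasurableSpace α] (μ : Measure α) {f g : α → ℝ≥0∞}
    (hf : Measurable f) (hg : Measurable g)
    (h : min (∫⁻ a, f a ∂μ) (∫⁻ a, g a ∂μ) < ⊤) :
    ((∫⁻ a, f a ∂μ : ℝ≥0∞) : EReal) - ((∫⁻ a, g a ∂μ : ℝ≥0∞) : EReal)
      = ((∫⁻ a, f a - g a ∂μ : ℝ≥0∞) : EReal) - ((∫⁻ a, g a - f a ∂μ : ℝ≥0∞) : EReal) := by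
  have hmin : Measurable fun a => min (f a) (g a) := hf.min hg
  have key1 : ∫⁻ a, f a ∂μ = ∫⁻ a, f a - g a ∂μ + ∫⁻ a, min (f a) (g a) ∂μ := by
    rw [← lintegral_add_right _ hmin]
    exact lintegral_congr fun a => (tsub_add_min).symm
  have key2 : ∫⁻ a, g a ∂μ = ∫⁻ a, g a - f a ∂μ + ∫⁻ a, min (f a) (g a) ∂μ := by
    rw [← lintegral_add_right _ hmin]
    refine lintegral_congr fun a => ?_
    rw [min_comm]
    exact (tsub_add_min).symm
  have hm : (∫⁻ a, min (f a) (g a) ∂μ) ≠ ⊤ := by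
    refine (lt_of_le_of_lt (le_min ?_ ?_) h).ne <;>
      exact lintegral_mono fun a => by simp [min_le_left, min_le_right]
  rw [key1, key2] at h ⊢
  exact ereal_cancel _ _ _ hm (lt_of_le_of_lt
    (min_le_min (le_add_right le_rfl) (le_add_right le_rfl)) h)

lemma fubini_indep {Ω D E : Type*} [mΩ : MeasurableSpace Ω] [MeasurableSpace D]
    [MeasurableSpace E] (μ : Measure Ω) [IsProbabilityMeasure μ]
    (𝓖 : MeasurableSpace Ω) (h𝓖 : 𝓖 ≤ mΩ)
    (Z : Ω → D) (hZ : Measurable[𝓖] Z)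
    (Y : Ω → E) (hY : Measurable[mΩ] Y)
    (hindep : Indep 𝓖 (MeasurableSpace.comap Y inferInstance) μ)
    (F : D × E → ℝ≥0∞) (hF : Measurable F) :
    ∫⁻ ω, F (Z ω, Y ω) ∂μ = ∫⁻ ω, (∫⁻ ω', F (Z ω, Y ω') ∂μ) ∂μ := by
  letI := mΩ
  have hZm : Measurable[mΩ] Z := hZ.mono h𝓖 le_rfl
  have hIF : @IndepFun Ω D E mΩ _ _ Z Y μ := indep_of_indep_of_le_left hindep hZ.comap_le
  have hmap : μ.map (fun ω => (Z ω, Y ω)) = (μ.map Z).prod (μ.map Y) :=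
    (indepFun_iff_map_prod_eq_prod_map_map (μ := μ) (f := Z) (g := Y)
      (hZm.aemeasurable (μ := μ)) (hY.aemeasurable (μ := μ))).mp hIF
  have hpY : IsProbabilityMeasure (μ.map Y) := Measure.isProbabilityMeasure_map hY.aemeasurable
  have hpZ : IsProbabilityMeasure (μ.map Z) := Measure.isProbabilityMeasure_map hZm.aemeasurable
  calc ∫⁻ ω, F (Z ω, Y ω) ∂μ
      = ∫⁻ q, F q ∂((μ.map Z).prod (μ.map Y)) := by
        rw [← hmap, lintegral_map hF (hZm.prodMk hY)]
    _ = ∫⁻ x, ∫⁻ y, F (x, y) ∂(μ.map Y) ∂(μ.map Z) := lintegral_prod _ hF.aemeasurable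
    _ = ∫⁻ ω, ∫⁻ y, F (Z ω, y) ∂(μ.map Y) ∂μ := lintegral_map hF.lintegral_prod_right' hZm
    _ = ∫⁻ ω, ∫⁻ ω', F (Z ω, Y ω') ∂μ ∂μ :=
        lintegral_congr fun ω => lintegral_map (hF.comp measurable_prodMk_left) hY

lemma meas_p {Ω D E : Type*} [mΩ : MeasurableSpace Ω] [MeasurableSpace D] [MeasurableSpace E]
    (μ : Measure Ω) [SFinite μ] (Φ : D × E → EReal) (hΦ : Measurable Φ)
    (Y : Ω → E) (hY : Measurable Y) :
    Measurable fun x => ∫⁻ ω, epos (Φ (x, Y ω)) ∂μ :=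
  Measurable.lintegral_prod_right'
    (epos_measurable.comp (hΦ.comp (measurable_fst.prodMk (hY.comp measurable_snd))))

lemma lint_indicator_mul {Ω : Type*} [mΩ : MeasurableSpace Ω] (μ : Measure Ω)
    (A : Set Ω) (hA : MeasurableSet A) (f : Ω → ℝ≥0∞) :
    ∫⁻ ω in A, f ω ∂μ = ∫⁻ ω, A.indicator 1 ω * f ω ∂μ := by
  rw [← lintegral_indicator hA]
  exact lintegral_congr fun ω => by by_cases hω : ω ∈ A <;> simp [hω]

theorem stmt8 {Ω D E : Type*} (𝓖 : MeasurableSpace Ω) [mΩ : MeasurableSpace Ω] [MeasurableSpace D] [MeasurableSpace E]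
    (μ : Measure Ω) [IsProbabilityMeasure μ]
    (Φ : D × E → EReal) (hΦ : Measurable Φ)
    (h𝓖 : 𝓖 ≤ mΩ)
    (X : Ω → D) (hX : Measurable[𝓖] X)
    (Y : Ω → E) (hY : Measurable Y)
    (hindep : Indep 𝓖 (MeasurableSpace.comap Y inferInstance) μ)
    (hfin : ∀ x : D,
      min (∫⁻ ω, epos (Φ (x, Y ω)) ∂μ) (∫⁻ ω, epos (-Φ (x, Y ω)) ∂μ) < ⊤)
    (φ : D → EReal)
    (hφ : ∀ x : D, φ x =
      ((∫⁻ ω, epos (Φ (x, Y ω)) ∂μ : ℝ≥0∞) : EReal)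
        - ((∫⁻ ω, epos (-Φ (x, Y ω)) ∂μ : ℝ≥0∞) : EReal)) :
    Measurable φ ∧
    ∀ A : Set Ω, MeasurableSet[𝓖] A →
      min (∫⁻ ω in A, epos (Φ (X ω, Y ω)) ∂μ) (∫⁻ ω in A, epos (-Φ (X ω, Y ω)) ∂μ) < ⊤ →
      ((∫⁻ ω in A, epos (Φ (X ω, Y ω)) ∂μ : ℝ≥0∞) : EReal)
          - ((∫⁻ ω in A, epos (-Φ (X ω, Y ω)) ∂μ : ℝ≥0∞) : EReal)
        = ((∫⁻ ω in A, epos (φ (X ω)) ∂μ : ℝ≥0∞) : EReal)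
            - ((∫⁻ ω in A, epos (-φ (X ω)) ∂μ : ℝ≥0∞) : EReal) := by
  letI := mΩ
  have hY' : Measurable[mΩ] Y := hY
  have hX' : Measurable[mΩ] X := hX.mono h𝓖 le_rfl
  have hnegΦ : Measurable fun q => -Φ q := by fun_prop
  have hpm : Measurable fun x => ∫⁻ ω, epos (Φ (x, Y ω)) ∂μ := meas_p μ Φ hΦ Y hY'
  have hnm : Measurable fun x => ∫⁻ ω, epos (-Φ (x, Y ω)) ∂μ :=
    meas_p μ (fun q => -Φ q) hnegΦ Y hY'
  constructor
  · have hφeq : φ = fun x =>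
        if (∫⁻ ω, epos (Φ (x, Y ω)) ∂μ) = ⊤ then
          (if (∫⁻ ω, epos (-Φ (x, Y ω)) ∂μ) = ⊤ then (⊥ : EReal) else ⊤)
        else if (∫⁻ ω, epos (-Φ (x, Y ω)) ∂μ) = ⊤ then ⊥
        else ((((∫⁻ ω, epos (Φ (x, Y ω)) ∂μ).toReal
            - (∫⁻ ω, epos (-Φ (x, Y ω)) ∂μ).toReal : ℝ)) : EReal) :=
      funext fun x => by rw [hφ x]; exact esub_eq _ _
    rw [hφeq]
    exact Measurable.ite (hpm (measurableSet_singleton ⊤))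
      (Measurable.ite (hnm (measurableSet_singleton ⊤)) measurable_const measurable_const)
      (Measurable.ite (hnm (measurableSet_singleton ⊤)) measurable_const
        (measurable_coe_real_ereal.comp ((hpm.ennreal_toReal).sub (hnm.ennreal_toReal))))
  · intro A hA hfinA
    have hAm : MeasurableSet[mΩ] A := h𝓖 _ hA
    have hZ : Measurable[𝓖] fun ω => (X ω, A.indicator (1 : Ω → ℝ≥0∞) ω) :=
      hX.prodMk ((measurable_const : Measurable[𝓖] (1 : Ω → ℝ≥0∞)).indicator hA)
    have hFpos : Measurable fun q : (D × ℝ≥0∞) × E => q.1.2 * epos (Φ (q.1.1, q.2)) :=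
      (measurable_fst.snd).mul
        (epos_measurable.comp (hΦ.comp ((measurable_fst.fst).prodMk measurable_snd)))
    have hFneg : Measurable fun q : (D × ℝ≥0∞) × E => q.1.2 * epos (-Φ (q.1.1, q.2)) :=
      (measurable_fst.snd).mul
        (epos_measurable.comp (hnegΦ.comp ((measurable_fst.fst).prodMk measurable_snd)))
    have hmeas_inner : ∀ x : D, Measurable[mΩ] fun ω' => epos (Φ (x, Y ω')) := fun x =>
      epos_measurable.comp (hΦ.comp ((measurable_const : Measurable[mΩ] fun _ : Ω => x).prodMk hY'))
    have hmeas_inner' : ∀ x : D, Measurable[mΩ] fun ω' => epos (-Φ (x, Y ω')) := fun x =>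
      epos_measurable.comp (hnegΦ.comp ((measurable_const : Measurable[mΩ] fun _ : Ω => x).prodMk hY'))
    have key_pos : ∫⁻ ω, A.indicator 1 ω * epos (Φ (X ω, Y ω)) ∂μ
        = ∫⁻ ω, A.indicator 1 ω * (∫⁻ ω', epos (Φ (X ω, Y ω')) ∂μ) ∂μ := by
      have h := fubini_indep μ 𝓖 h𝓖 _ hZ Y hY' hindep _ hFpos
      refine Eq.trans ?_ (Eq.trans h ?_)
      · rfl
      · exact lintegral_congr fun ω => lintegral_const_mul _ (hmeas_inner (X ω))
    have key_neg : ∫⁻ ω, A.indicator 1 ω * epos (-Φ (X ω, Y ω)) ∂μ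
        = ∫⁻ ω, A.indicator 1 ω * (∫⁻ ω', epos (-Φ (X ω, Y ω')) ∂μ) ∂μ := by
      have h := fubini_indep μ 𝓖 h𝓖 _ hZ Y hY' hindep _ hFneg
      refine Eq.trans ?_ (Eq.trans h ?_)
      · rfl
      · exact lintegral_congr fun ω => lintegral_const_mul _ (hmeas_inner' (X ω))
    have hPA : ∫⁻ ω in A, epos (Φ (X ω, Y ω)) ∂μ
        = ∫⁻ ω in A, (∫⁻ ω', epos (Φ (X ω, Y ω')) ∂μ) ∂μ := by
      rw [lint_indicator_mul μ A hAm, lint_indicator_mul μ A hAm, key_pos]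
    have hNA : ∫⁻ ω in A, epos (-Φ (X ω, Y ω)) ∂μ
        = ∫⁻ ω in A, (∫⁻ ω', epos (-Φ (X ω, Y ω')) ∂μ) ∂μ := by
      rw [lint_indicator_mul μ A hAm, lint_indicator_mul μ A hAm, key_neg]
    rw [hPA, hNA] at hfinA ⊢
    have h1 : ∀ ω, epos (φ (X ω))
        = (∫⁻ ω', epos (Φ (X ω, Y ω')) ∂μ) - (∫⁻ ω', epos (-Φ (X ω, Y ω')) ∂μ) := fun ω => by
      rw [hφ]; exact epos_sub_pos _ _ (hfin (X ω))
    have h2 : ∀ ω, epos (-φ (X ω))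
        = (∫⁻ ω', epos (-Φ (X ω, Y ω')) ∂μ) - (∫⁻ ω', epos (Φ (X ω, Y ω')) ∂μ) := fun ω => by
      rw [hφ]; exact epos_sub_neg _ _ (hfin (X ω))
    simp only [h1, h2]
    exact lint_sub_eq (μ.restrict A) (hpm.comp hX') (hnm.comp hX') hfinA
end

section
/- Let (Ω, 𝓕, ℙ) be a probability space, 𝓖 ⊆ 𝓕 a sub-sigma-algebra, m, n ∈ ℕ, Φ: ℝᵐ × ℝⁿ → ℝ measurable, X: Ω → ℝᵐ 𝓖-measurable, Y: Ω → ℝⁿ a random variable with σ(Y) independent of 𝓖, and assume E[|Φ(x,Y)|] < ∞ for all x ∈ ℝᵐ. Define ψ: ℝᵐ → [0,∞] by ψ(x) = Var(Φ(x,Y)). Then ψ is measurable, ℙ-a.s. E[(Φ(X,Y) − E[Φ(X,Y)|𝓖])² | 𝓖] = ψ(X), and E[(Φ(X,Y) − E[Φ(X,Y)|𝓖])²] = E[ψ(X)]. -/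
open MeasureTheory ProbabilityTheory
open scoped ENNReal

theorem stmt9 {Ω : Type*} (𝓖 : MeasurableSpace Ω) [mΩ : MeasurableSpace Ω] (μ : Measure Ω) [IsProbabilityMeasure μ]
    (h𝓖 : 𝓖 ≤ mΩ)
    (m n : ℕ) (hm : 1 ≤ m) (hn : 1 ≤ n)
    (Φ : (Fin m → ℝ) × (Fin n → ℝ) → ℝ) (hΦ : Measurable Φ)
    (X : Ω → Fin m → ℝ) (hX : Measurable[𝓖] X)
    (Y : Ω → Fin n → ℝ) (hY : Measurable Y)
    (hindep : Indep 𝓖 (MeasurableSpace.comap Y inferInstance) μ)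
    (hint : ∀ x : Fin m → ℝ, Integrable (fun ω => Φ (x, Y ω)) μ)
    (φ : (Fin m → ℝ) → ℝ) (hφ : ∀ x, φ x = ∫ ω, Φ (x, Y ω) ∂μ)
    (ψ : (Fin m → ℝ) → ℝ≥0∞)
    (hψ : ∀ x, ψ x = evariance (fun ω => Φ (x, Y ω)) μ) :
    Measurable ψ ∧
    (∀ A : Set Ω, MeasurableSet[𝓖] A →
      ∫⁻ ω in A, ENNReal.ofReal ((Φ (X ω, Y ω) - φ (X ω)) ^ 2) ∂μ
        = ∫⁻ ω in A, ψ (X ω) ∂μ) ∧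
    ∫⁻ ω, ENNReal.ofReal ((Φ (X ω, Y ω) - φ (X ω)) ^ 2) ∂μ = ∫⁻ ω, ψ (X ω) ∂μ := by
  letI := mΩ
  have hY' : Measurable[mΩ] Y := hY
  set ν : Measure (Fin n → ℝ) := μ.map Y with hν
  haveI : IsProbabilityMeasure ν := Measure.isProbabilityMeasure_map hY'.aemeasurable
  -- φ is measurable
  have hφeq : φ = fun x => ∫ y, Φ (x, y) ∂ν := by
    funext x
    rw [hφ x, hν, integral_map hY'.aemeasurable
      (show AEStronglyMeasurable (fun y => Φ (x, y)) (μ.map Y) from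
        ((hΦ.comp measurable_prodMk_left).aestronglyMeasurable))]
  have hφ_meas : Measurable φ := by
    rw [hφeq]
    exact (hΦ.stronglyMeasurable.integral_prod_right').measurable
  -- the key nonnegative integrand
  set g : (Fin m → ℝ) × (Fin n → ℝ) → ℝ≥0∞ :=
    fun p => ENNReal.ofReal ((Φ p - φ p.1) ^ 2) with hg
  have hg_meas : Measurable g :=
    ENNReal.measurable_ofReal.comp ((hΦ.sub (hφ_meas.comp measurable_fst)).pow_const 2)
  -- ψ equals the partial lintegral of g
  have hψeq : ∀ x, ψ x = ∫⁻ y, g (x, y) ∂ν := by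
    intro x
    rw [hψ, evariance_eq_lintegral_ofReal, hν,
      lintegral_map (show Measurable fun y => g (x, y) from
        hg_meas.comp measurable_prodMk_left) hY']
    simp only [hg]
    congr 1
    funext ω
    rw [← hφ x]
  have hψ_meas : Measurable ψ := by
    have h2 : ψ = fun x => ∫⁻ y, g (x, y) ∂ν := funext hψeq
    rw [h2]
    exact hg_meas.lintegral_prod_right'
  -- the conditional statement
  have key : ∀ A : Set Ω, MeasurableSet[𝓖] A →
      ∫⁻ ω in A, g (X ω, Y ω) ∂μ = ∫⁻ ω in A, ψ (X ω) ∂μ := by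
    intro A hA
    set U : Ω → (Fin m → ℝ) × ℝ := fun ω => (X ω, A.indicator (fun _ => (1 : ℝ)) ω) with hU
    have hU𝓖 : Measurable[𝓖] U :=
      Measurable.prodMk hX (Measurable.indicator (measurable_const) hA)
    have hU_meas : Measurable[mΩ] U := hU𝓖.mono h𝓖 le_rfl
    have hUY : IndepFun U Y μ := by
      rw [IndepFun_iff]
      rw [Indep_iff] at hindep
      intro t1 t2 ht1 ht2
      exact hindep t1 t2 (hU𝓖.comap_le t1 ht1) ht2
    have hmap : μ.map (fun ω => (U ω, Y ω)) = (μ.map U).prod ν :=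
      (indepFun_iff_map_prod_eq_prod_map_map hU_meas.aemeasurable hY'.aemeasurable).mp hUY
    haveI : IsProbabilityMeasure (μ.map U) := Measure.isProbabilityMeasure_map hU_meas.aemeasurable
    set F : ((Fin m → ℝ) × ℝ) × (Fin n → ℝ) → ℝ≥0∞ :=
      fun q => ENNReal.ofReal q.1.2 * g (q.1.1, q.2) with hF
    have hF_meas : Measurable F :=
      (ENNReal.measurable_ofReal.comp measurable_fst.snd).mul
        (hg_meas.comp (measurable_fst.fst.prodMk measurable_snd))
    have hAmeas : MeasurableSet[mΩ] A := h𝓖 _ hA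
    calc ∫⁻ ω in A, g (X ω, Y ω) ∂μ
        = ∫⁻ ω, F (U ω, Y ω) ∂μ := by
          rw [← lintegral_indicator hAmeas]
          congr 1
          funext ω
          by_cases hω : ω ∈ A <;> simp [hF, hU, hω]
      _ = ∫⁻ q, F q ∂((μ.map U).prod ν) := by
          rw [← hmap, lintegral_map hF_meas (hU_meas.prodMk hY')]
      _ = ∫⁻ u, ∫⁻ y, F (u, y) ∂ν ∂(μ.map U) := lintegral_prod F hF_meas.aemeasurable
      _ = ∫⁻ u, ENNReal.ofReal u.2 * ψ u.1 ∂(μ.map U) := by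
          congr 1
          funext u
          rw [hψeq]
          simp only [hF]
          rw [lintegral_const_mul _ (show Measurable fun y => g (u.1, y) from
            hg_meas.comp measurable_prodMk_left)]
      _ = ∫⁻ ω, ENNReal.ofReal ((U ω).2) * ψ ((U ω).1) ∂μ := by
          rw [lintegral_map (show Measurable fun u : (Fin m → ℝ) × ℝ =>
            ENNReal.ofReal u.2 * ψ u.1 from (ENNReal.measurable_ofReal.comp measurable_snd).mul
            (hψ_meas.comp measurable_fst)) hU_meas]
      _ = ∫⁻ ω in A, ψ (X ω) ∂μ := by
          rw [← lintegral_indicator hAmeas]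
          congr 1
          funext ω
          by_cases hω : ω ∈ A <;> simp [hU, hω]
  refine ⟨hψ_meas, key, ?_⟩
  have := key Set.univ MeasurableSet.univ
  simpa using this
end

section
/- Let (Ω, 𝓕, ℙ) be a probability space, D ⊆ [−∞,∞], X: Ω → D a random variable, and 𝓖 ⊆ 𝓕 a sub-sigma-algebra. Then X is improper 𝓖-conditional ℙ-integrable if and only if ℙ(min{E[max{X,0}|𝓖], E[max{−X,0}|𝓖]} < ∞) = 1, and moreover ℙ(min{E[max{X,0}|𝓖], E[max{−X,0}|𝓖]} < ∞) = ℙ({E[max{X,0}|𝓖] < ∞} ∪ {E[max{−X,0}|𝓖] < ∞}). -/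
open MeasureTheory
open scoped ENNReal

/-- `X` is improper `𝓖`-conditional `μ`-integrable: there is a countable `𝓖`-measurable
cover of `Ω` on each piece of which `X⁺` or `X⁻` has finite expectation. -/
def ImproperCondIntegrable {Ω : Type*} {mΩ : MeasurableSpace Ω} (μ : Measure Ω)
    (𝓖 : MeasurableSpace Ω) (X : Ω → EReal) : Prop :=
  ∃ A : ℕ → Set Ω, (∀ n, MeasurableSet[𝓖] (A n)) ∧ (⋃ n, A n) = Set.univ ∧
    ∀ n, min (∫⁻ ω in A n, epos (X ω) ∂μ) (∫⁻ ω in A n, epos (-X ω) ∂μ) < ⊤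

theorem stmt12 {Ω : Type*} [mΩ : MeasurableSpace Ω] (μ : Measure Ω) [IsProbabilityMeasure μ]
    (D : Set EReal) (X : Ω → EReal) (hX : Measurable X) (hD : ∀ ω, X ω ∈ D)
    (𝓖 : MeasurableSpace Ω) (h𝓖 : 𝓖 ≤ mΩ)
    -- `Vp` and `Vm` are (versions of) the conditional expectations of `X⁺` and `X⁻` given `𝓖`
    (Vp Vm : Ω → ℝ≥0∞) (hVpm : Measurable[𝓖] Vp) (hVmm : Measurable[𝓖] Vm)
    (hVp : ∀ A : Set Ω, MeasurableSet[𝓖] A →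
      ∫⁻ ω in A, Vp ω ∂μ = ∫⁻ ω in A, epos (X ω) ∂μ)
    (hVm : ∀ A : Set Ω, MeasurableSet[𝓖] A →
      ∫⁻ ω in A, Vm ω ∂μ = ∫⁻ ω in A, epos (-X ω) ∂μ) :
    (ImproperCondIntegrable μ 𝓖 X ↔ μ {ω | min (Vp ω) (Vm ω) < ⊤} = 1) ∧
    μ {ω | min (Vp ω) (Vm ω) < ⊤} = μ ({ω | Vp ω < ⊤} ∪ {ω | Vm ω < ⊤}) := by
  have hVpM : @Measurable Ω ℝ≥0∞ mΩ _ Vp := Measurable.mono (ma := 𝓖) (ma' := mΩ) hVpm h𝓖 le_rfl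
  have hVmM : @Measurable Ω ℝ≥0∞ mΩ _ Vm := Measurable.mono (ma := 𝓖) (ma' := mΩ) hVmm h𝓖 le_rfl
  set S : Set Ω := {ω | min (Vp ω) (Vm ω) < ⊤} with hSdef
  have hSG : MeasurableSet[𝓖] S :=
    measurableSet_lt (hVpm.min hVmm) measurable_const
  have hSm : MeasurableSet[mΩ] S := h𝓖 _ hSG
  constructor
  · constructor
    · rintro ⟨A, hAmeas, hAcover, hAfin⟩
      rw [← prob_compl_eq_zero_iff (μ := μ) hSm]
      have hsub : Sᶜ ⊆ ⋃ n, (A n ∩ Sᶜ) := by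
        intro ω hω
        have : ω ∈ ⋃ n, A n := by rw [hAcover]; trivial
        rcases Set.mem_iUnion.mp this with ⟨n, hn⟩
        exact Set.mem_iUnion.mpr ⟨n, hn, hω⟩
      refine measure_mono_null hsub (measure_iUnion_null fun n => ?_)
      have hAn : MeasurableSet[mΩ] (A n) := h𝓖 _ (hAmeas n)
      -- on A n, one of the two conditional expectations is a.e. finite
      rcases min_lt_iff.mp (hAfin n) with h | h
      · have hfin : ∫⁻ ω in A n, Vp ω ∂μ ≠ ⊤ := by
          rw [hVp _ (hAmeas n)]; exact h.ne
        have hae : ∀ᵐ ω ∂μ.restrict (A n), Vp ω < ⊤ := ae_lt_top hVpM hfin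
        have h0 : (μ.restrict (A n)) {ω | ¬ Vp ω < ⊤} = 0 := hae
        have hsub2 : A n ∩ Sᶜ ⊆ {ω | ¬ Vp ω < ⊤} ∩ A n := by
          rintro ω ⟨h1, h2⟩
          refine ⟨fun hlt => h2 ?_, h1⟩
          exact lt_of_le_of_lt (min_le_left _ _) hlt
        refine measure_mono_null hsub2 ?_
        rw [← Measure.restrict_apply' hAn]
        exact h0
      · have hfin : ∫⁻ ω in A n, Vm ω ∂μ ≠ ⊤ := by
          rw [hVm _ (hAmeas n)]; exact h.ne
        have hae : ∀ᵐ ω ∂μ.restrict (A n), Vm ω < ⊤ := ae_lt_top hVmM hfin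
        have h0 : (μ.restrict (A n)) {ω | ¬ Vm ω < ⊤} = 0 := hae
        have hsub2 : A n ∩ Sᶜ ⊆ {ω | ¬ Vm ω < ⊤} ∩ A n := by
          rintro ω ⟨h1, h2⟩
          refine ⟨fun hlt => h2 ?_, h1⟩
          exact lt_of_le_of_lt (min_le_right _ _) hlt
        refine measure_mono_null hsub2 ?_
        rw [← Measure.restrict_apply' hAn]
        exact h0
    · intro hS1
      have hSc0 : μ Sᶜ = 0 := (prob_compl_eq_zero_iff (μ := μ) hSm).mpr hS1
      have hSc0' : μ.restrict Sᶜ = 0 := Measure.restrict_eq_zero.mpr hSc0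
      set A : ℕ → Set Ω := fun n =>
        Sᶜ ∪ (if Even n then {ω | Vp ω ≤ (n / 2 : ℕ)} else {ω | Vm ω ≤ (n / 2 : ℕ)})
        with hAdef
      have hAG : ∀ n, MeasurableSet[𝓖] (A n) := by
        intro n
        refine MeasurableSet.union hSG.compl ?_
        split
        · exact measurableSet_le hVpm measurable_const
        · exact measurableSet_le hVmm measurable_const
      refine ⟨A, hAG, ?_, ?_⟩
      · rw [Set.eq_univ_iff_forall]
        intro ω
        by_cases hω : ω ∈ S
        · rcases min_lt_iff.mp (show min (Vp ω) (Vm ω) < ⊤ from hω) with h | h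
          · rcases ENNReal.exists_nat_gt h.ne with ⟨k, hk⟩
            refine Set.mem_iUnion.mpr ⟨2 * k, Or.inr ?_⟩
            simp only [even_two_mul, if_pos, Nat.mul_div_cancel_left k two_pos]
            exact hk.le
          · rcases ENNReal.exists_nat_gt h.ne with ⟨k, hk⟩
            refine Set.mem_iUnion.mpr ⟨2 * k + 1, Or.inr ?_⟩
            have hodd : ¬ Even (2 * k + 1) := by simp [Nat.even_add_one]
            simp only [if_neg hodd]
            have : (2 * k + 1) / 2 = k := by omega
            rw [this]
            exact hk.le
        · exact Set.mem_iUnion.mpr ⟨0, Or.inl hω⟩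
      · intro n
        -- generic bound: lintegral over Sᶜ ∪ B of a function bounded by n/2 on B
        have key : ∀ (V : Ω → ℝ≥0∞),
            ∫⁻ ω in Sᶜ ∪ {ω | V ω ≤ (n / 2 : ℕ)}, V ω ∂μ < ⊤ := by
          intro V
          have h1 : ∫⁻ ω in Sᶜ ∪ {ω | V ω ≤ (n / 2 : ℕ)}, V ω ∂μ ≤
              ∫⁻ ω in Sᶜ, V ω ∂μ + ∫⁻ ω in {ω | V ω ≤ (n / 2 : ℕ)}, V ω ∂μ := by
            rw [← lintegral_add_measure]
            exact lintegral_mono' (Measure.restrict_union_le _ _) le_rfl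
          have h2 : ∫⁻ ω in Sᶜ, V ω ∂μ = 0 := by rw [hSc0']; simp
          have h3 : ∫⁻ ω in {ω | V ω ≤ (n / 2 : ℕ)}, V ω ∂μ ≤
              ((n / 2 : ℕ) : ℝ≥0∞) * μ {ω | V ω ≤ (n / 2 : ℕ)} := by
            rw [← setLIntegral_const]
            exact setLIntegral_mono measurable_const (fun x hx => hx)
          refine lt_of_le_of_lt h1 ?_
          rw [h2, zero_add]
          refine lt_of_le_of_lt h3 ?_
          exact ENNReal.mul_lt_top (ENNReal.natCast_lt_top _) (measure_lt_top μ _)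
        by_cases hn : Even n
        · refine lt_of_le_of_lt (min_le_left _ _) ?_
          rw [hAdef]
          simp only [if_pos hn]
          rw [← hVp _ (by simpa [hAdef, if_pos hn] using hAG n)]
          exact key Vp
        · refine lt_of_le_of_lt (min_le_right _ _) ?_
          rw [hAdef]
          simp only [if_neg hn]
          rw [← hVm _ (by simpa [hAdef, if_neg hn] using hAG n)]
          exact key Vm
  · congr 1
    ext ω
    simp [hSdef, min_lt_iff]
end

section
/- Let p ∈ ℕ, a ∈ ℝ, b ∈ [a,∞), i ∈ {1,...,p}, 0 < η ≤ C, c ≥ max{|a|,|b|}, and let g: ℝᵖ × [a,b]ᵖ → ℝ satisfy: (1) C(x_i − c) ≤ g(ϑ, x) ≤ C(x_i + c) whenever ϑ_i = x_i, and (2) η·|θ_i − x_i|² ≤ (θ_i − x_i)·g(θ, x) ≤ C·|θ_i − x_i|² for all θ ∈ ℝᵖ, x ∈ [a,b]ᵖ. Then for all θ ∈ ℝᵖ and x ∈ [a,b]ᵖ it holds that (θ_i − c)·(η + (C − η)·1_{(−∞,c]}(θ_i)) ≤ g(θ, x) ≤ (θ_i + c)·(η + (C − η)·1_{[−c,∞)}(θ_i)).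 -/
theorem stmt17 (p : ℕ) (a b : ℝ) (hab : a ≤ b) (i : Fin p) (η C c : ℝ)
    (hη : 0 < η) (hηC : η ≤ C) (hc : max |a| |b| ≤ c)
    (g : (Fin p → ℝ) → (Fin p → ℝ) → ℝ)
    (h1 : ∀ (ϑ x : Fin p → ℝ), (∀ j, x j ∈ Set.Icc a b) → ϑ i = x i →
      C * (x i - c) ≤ g ϑ x ∧ g ϑ x ≤ C * (x i + c))
    (h2 : ∀ (θ x : Fin p → ℝ), (∀ j, x j ∈ Set.Icc a b) →
      η * |θ i - x i| ^ 2 ≤ (θ i - x i) * g θ x ∧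
        (θ i - x i) * g θ x ≤ C * |θ i - x i| ^ 2) :
    ∀ (θ x : Fin p → ℝ), (∀ j, x j ∈ Set.Icc a b) →
      (θ i - c) * (η + (C - η) * Set.indicator (Set.Iic c) (fun _ => (1 : ℝ)) (θ i))
          ≤ g θ x ∧
      g θ x ≤
        (θ i + c) * (η + (C - η) * Set.indicator (Set.Ici (-c)) (fun _ => (1 : ℝ)) (θ i)) := by
  intro θ x hx
  have hxi := hx i
  have ha : |a| ≤ c := le_trans (le_max_left _ _) hc
  have hb : |b| ≤ c := le_trans (le_max_right _ _) hc
  have ha' := abs_le.mp ha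
  have hb' := abs_le.mp hb
  have hs1 : -c ≤ x i := by linarith [hxi.1, ha'.1]
  have hs2 : x i ≤ c := by linarith [hxi.2, hb'.2]
  have hC : 0 < C := lt_of_lt_of_le hη hηC
  obtain ⟨hl, hr⟩ := h2 θ x hx
  rw [sq_abs] at hl hr
  rcases eq_or_ne (θ i) (x i) with heq | hne
  · obtain ⟨g1, g2⟩ := h1 θ x hx heq
    have hmem1 : θ i ∈ Set.Iic c := by rw [heq]; exact hs2
    have hmem2 : θ i ∈ Set.Ici (-c) := by rw [heq]; exact hs1
    rw [Set.indicator_of_mem hmem1, Set.indicator_of_mem hmem2, heq]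
    constructor <;> nlinarith
  · rcases hne.lt_or_gt with hlt | hgt
    · have hg1 : C * (θ i - x i) ≤ g θ x := by nlinarith
      have hg2 : g θ x ≤ η * (θ i - x i) := by nlinarith
      have hmem1 : θ i ∈ Set.Iic c := Set.mem_Iic.mpr (by linarith)
      rw [Set.indicator_of_mem hmem1]
      constructor
      · nlinarith
      · by_cases hm : θ i ∈ Set.Ici (-c)
        · rw [Set.indicator_of_mem hm]
          have h' : -c ≤ θ i := hm
          nlinarith
        · rw [Set.indicator_of_notMem hm]
          have h' : θ i < -c := by simpa [Set.mem_Ici, not_le] using hm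
          nlinarith
    · have hg1 : η * (θ i - x i) ≤ g θ x := by nlinarith
      have hg2 : g θ x ≤ C * (θ i - x i) := by nlinarith
      have hmem2 : θ i ∈ Set.Ici (-c) := Set.mem_Ici.mpr (by linarith)
      rw [Set.indicator_of_mem hmem2]
      constructor
      · by_cases hm : θ i ∈ Set.Iic c
        · rw [Set.indicator_of_mem hm]
          have h' : θ i ≤ c := hm
          nlinarith
        · rw [Set.indicator_of_notMem hm]
          have h' : c < θ i := by simpa [Set.mem_Iic, not_le] using hm
          nlinarith
      · nlinarith
end

section
/- Let ε, η ∈ (0,∞), α ∈ [0,1), β ∈ (α², 1), c, M₀ ∈ [0,∞), m ∈ ℝ, and let G: ℕ → ℝ, κ: ℕ → (0,∞), γ: ℕ → [0,∞), Θ: ℕ₀ → ℝ satisfy for all k ≥ 1: Θ_k = Θ_{k−1} − γ_k·(αᵏm + Σ_{j=1}^{k}(1−α)α^{k−j}G_j) / (ε + (βᵏM₀ + Σ_{j=1}^{k} κ_k β^{k−j}G_j²)^{1/2}). Suppose n ∈ ℕ and S ∈ [0,∞) satisfy βⁿM₀ + Σ_{j=1}^{n} κ_n β^{n−j}G_j²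 = S² and |Θ_{n−1}| ≤ c + η⁻¹|G_n|. Then |Θ_n| ≤ c + S/(η·κ_n^{1/2}) + γ_n αⁿ|m|/(ε + S) + γ_n(1−α)β^{1/2}/(κ_n^{1/2}(β − α²)^{1/2}). -/
/-!
The numerator is bounded by `αⁿ|m| + (1 - α) ∑ αⁿ⁻ʲ |G_j|`. Writing
`αⁿ⁻ʲ = (α²/β)^((n-j)/2) β^((n-j)/2)`, Cauchy–Schwarz bounds the momentum sum by the geometric
series `∑ (α²/β)ᵏ ≤ β / (β - α²)` times the second-moment sum, which is at most `S² / κₙ`.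
The last summand of that sum alone gives `|Gₙ| ≤ S / √κₙ`, and the factor `S / (ε + S) ≤ 1`
removes `S` from the momentum contribution.
-/

open Finset

section OrderedField

variable {K : Type*} [Field K] [LinearOrder K] [IsStrictOrderedRing K]

lemma sum_Icc_pow_sub_le {r : K} (h0 : 0 ≤ r) (h1 : r < 1) (a n : ℕ) :
    ∑ j ∈ Icc a n, r ^ (n - j) ≤ (1 - r)⁻¹ :=
  calc ∑ j ∈ Icc a n, r ^ (n - j) ≤ ∑ j ∈ range (n + 1), r ^ (n - j) :=
        sum_le_sum_of_subset_of_nonneg (fun j hj => by simp at hj ⊢; omega)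
          fun _ _ _ => pow_nonneg h0 _
    _ = ∑ i ∈ range (n + 1), r ^ i := by simpa using sum_range_reflect (r ^ ·) (n + 1)
    _ ≤ (1 - r)⁻¹ := by
        simpa [← range_eq_Ico] using
          (geom_sum_Ico_le_of_lt_one h0 h1 : ∑ i ∈ Ico 0 (n + 1), r ^ i ≤ _)

lemma sq_sum_pow_mul_abs_le {α β : K} (hαβ : α ^ 2 < β) (x : ℕ → K) (a n : ℕ) :
    (∑ j ∈ Icc a n, α ^ (n - j) * |x j|) ^ 2 ≤
      β / (β - α ^ 2) * ∑ j ∈ Icc a n, β ^ (n - j) * x j ^ 2 := by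
  have hβ : 0 < β := (sq_nonneg α).trans_lt hαβ
  have hgeom : ∑ j ∈ Icc a n, (α ^ 2 / β) ^ (n - j) ≤ β / (β - α ^ 2) := by
    convert sum_Icc_pow_sub_le (by positivity) ((div_lt_one hβ).mpr hαβ) a n using 1
    field_simp
  calc (∑ j ∈ Icc a n, α ^ (n - j) * |x j|) ^ 2
      ≤ (∑ j ∈ Icc a n, (α ^ 2 / β) ^ (n - j)) *
          ∑ j ∈ Icc a n, β ^ (n - j) * x j ^ 2 :=
        sum_sq_le_sum_mul_sum_of_sq_le_mul _ (fun _ _ => by positivity)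
          (fun _ _ => by positivity) fun j _ => le_of_eq <| by
            rw [mul_pow, sq_abs, div_pow, ← pow_mul, ← pow_mul, mul_comm (n - j)]
            field_simp
    _ ≤ β / (β - α ^ 2) * ∑ j ∈ Icc a n, β ^ (n - j) * x j ^ 2 :=
        mul_le_mul_of_nonneg_right hgeom (sum_nonneg fun _ _ => by positivity)

lemma abs_momentum_le {α : K} (h0 : 0 ≤ α) (h1 : α ≤ 1) (m : K) (x : ℕ → K) (a n : ℕ) :
    |α ^ n * m + ∑ j ∈ Icc a n, (1 - α) * α ^ (n - j) * x j| ≤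
      α ^ n * |m| + (1 - α) * ∑ j ∈ Icc a n, α ^ (n - j) * |x j| := by
  have h1α : 0 ≤ 1 - α := sub_nonneg.mpr h1
  calc _ ≤ |α ^ n * m| + ∑ j ∈ Icc a n, |(1 - α) * α ^ (n - j) * x j| :=
        (abs_add_le _ _).trans (add_le_add le_rfl (abs_sum_le_sum_abs _ _))
    _ = _ := by
        simp only [abs_mul, abs_pow, abs_of_nonneg h0, abs_of_nonneg h1α, mul_sum, mul_assoc]

end OrderedField

lemma sum_pow_mul_abs_le {α β κ S : ℝ} (hαβ : α ^ 2 < β) (hκ : 0 < κ) (hS : 0 ≤ S)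
    (x : ℕ → ℝ) (a n : ℕ) (h : ∑ j ∈ Icc a n, κ * β ^ (n - j) * x j ^ 2 ≤ S ^ 2) :
    ∑ j ∈ Icc a n, α ^ (n - j) * |x j| ≤
      Real.sqrt β / (Real.sqrt κ * Real.sqrt (β - α ^ 2)) * S := by
  have hβ : 0 < β := (sq_nonneg α).trans_lt hαβ
  have hgap : 0 < β - α ^ 2 := sub_pos.mpr hαβ
  have hsum : ∑ j ∈ Icc a n, β ^ (n - j) * x j ^ 2 ≤ S ^ 2 / κ := by
    rw [le_div_iff₀ hκ, sum_mul]
    simpa only [mul_comm κ, mul_assoc] using h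
  refine le_of_sq_le_sq ?_ (by positivity)
  calc _ ≤ β / (β - α ^ 2) * ∑ j ∈ Icc a n, β ^ (n - j) * x j ^ 2 :=
        sq_sum_pow_mul_abs_le hαβ x a n
    _ ≤ β / (β - α ^ 2) * (S ^ 2 / κ) := by gcongr
    _ = _ := by
        rw [mul_pow, div_pow, mul_pow, Real.sq_sqrt hβ.le, Real.sq_sqrt hκ.le,
          Real.sq_sqrt hgap.le]
        field_simp

lemma sqrt_mul_abs_le_of_sum_le {β κ S : ℝ} (hβ : 0 ≤ β) (hκ : 0 ≤ κ) (hS : 0 ≤ S)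
    (x : ℕ → ℝ) {a n : ℕ} (han : a ≤ n)
    (h : ∑ j ∈ Icc a n, κ * β ^ (n - j) * x j ^ 2 ≤ S ^ 2) :
    Real.sqrt κ * |x n| ≤ S := by
  refine le_of_sq_le_sq ?_ hS
  rw [mul_pow, Real.sq_sqrt hκ, sq_abs]
  simpa using (single_le_sum (fun j _ => by positivity) (mem_Icc.mpr ⟨han, le_rfl⟩)).trans h

lemma abs_momentum_div_le {γ α β κ S d : ℝ} (hγ : 0 ≤ γ) (hα0 : 0 ≤ α) (hα1 : α ≤ 1)
    (hαβ : α ^ 2 < β) (hκ : 0 < κ) (hS : 0 ≤ S) (hd : 0 < d) (hSd : S ≤ d)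
    (m : ℝ) (x : ℕ → ℝ) (a n : ℕ)
    (h : ∑ j ∈ Icc a n, κ * β ^ (n - j) * x j ^ 2 ≤ S ^ 2) :
    |γ * (α ^ n * m + ∑ j ∈ Icc a n, (1 - α) * α ^ (n - j) * x j) / d| ≤
      γ * α ^ n * |m| / d +
        γ * (1 - α) * Real.sqrt β / (Real.sqrt κ * Real.sqrt (β - α ^ 2)) := by
  set C := Real.sqrt β / (Real.sqrt κ * Real.sqrt (β - α ^ 2)) with hC
  have h1α : 0 ≤ 1 - α := sub_nonneg.mpr hα1
  rw [abs_div, abs_mul, abs_of_nonneg hγ, abs_of_pos hd]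
  calc _ ≤ γ * (α ^ n * |m| + (1 - α) * (C * S)) / d := by
        gcongr
        exact (abs_momentum_le hα0 hα1 m x a n).trans
          (by gcongr; exact sum_pow_mul_abs_le hαβ hκ hS x a n h)
    _ = γ * α ^ n * |m| / d + γ * (1 - α) * C * (S / d) := by ring
    _ ≤ γ * α ^ n * |m| / d + γ * (1 - α) * C :=
        add_le_add le_rfl <|
          mul_le_of_le_one_right (by positivity) ((div_le_one hd).mpr hSd)
    _ = _ := by rw [hC]; ring

theorem stmt18_general (ε η : ℝ) (hε : 0 < ε) (hη : 0 < η)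
    (α : ℝ) (hα : α ∈ Set.Ico (0 : ℝ) 1) (β : ℝ) (hβ : β ∈ Set.Ioo (α ^ 2) 1)
    (c M₀ : ℝ) (hM₀ : 0 ≤ M₀) (m : ℝ)
    (G : ℕ → ℝ) (κ : ℕ → ℝ) (hκ : ∀ k, 0 < κ k)
    (γ : ℕ → ℝ) (hγ : ∀ k, 0 ≤ γ k) (Θ : ℕ → ℝ)
    (hrec : ∀ k, 1 ≤ k → Θ k = Θ (k - 1) -
      (γ k * (α ^ k * m + ∑ j ∈ Finset.Icc 1 k, (1 - α) * α ^ (k - j) * G j)) /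
        (ε + Real.sqrt (β ^ k * M₀ + ∑ j ∈ Finset.Icc 1 k, κ k * β ^ (k - j) * (G j) ^ 2)))
    (n : ℕ) (hn : 1 ≤ n) (S : ℝ) (hS : 0 ≤ S)
    (hS2 : β ^ n * M₀ + ∑ j ∈ Finset.Icc 1 n, κ n * β ^ (n - j) * (G j) ^ 2 = S ^ 2)
    (hΘ : |Θ (n - 1)| ≤ c + η⁻¹ * |G n|) :
    |Θ n| ≤ c + S / (η * Real.sqrt (κ n)) + γ n * α ^ n * |m| / (ε + S) +
      γ n * (1 - α) * Real.sqrt β / (Real.sqrt (κ n) * Real.sqrt (β - α ^ 2)) := by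
  obtain ⟨hα0, hα1⟩ := hα
  have hβ0 : 0 < β := (sq_nonneg α).trans_lt hβ.1
  have hsum : ∑ j ∈ Icc 1 n, κ n * β ^ (n - j) * G j ^ 2 ≤ S ^ 2 :=
    hS2 ▸ le_add_of_nonneg_left (by positivity)
  have hGn := sqrt_mul_abs_le_of_sum_le hβ0.le (hκ n).le hS G hn hsum
  have hηG : η⁻¹ * |G n| ≤ S / (η * Real.sqrt (κ n)) := by
    rw [inv_mul_eq_div, div_le_div_iff₀ hη (mul_pos hη (Real.sqrt_pos.mpr (hκ n)))]
    nlinarith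
  have hstep := abs_momentum_div_le (hγ n) hα0 hα1.le hβ.1 (hκ n) hS
    (add_pos_of_pos_of_nonneg hε hS) (le_add_of_nonneg_left hε.le) m G 1 n hsum
  rw [hrec n hn, hS2, Real.sqrt_sq hS]
  calc _ ≤ |Θ (n - 1)| + _ := abs_sub _ _
    _ ≤ _ := by linarith

theorem stmt18 (ε η : ℝ) (hε : 0 < ε) (hη : 0 < η)
    (α : ℝ) (hα : α ∈ Set.Ico (0 : ℝ) 1) (β : ℝ) (hβ : β ∈ Set.Ioo (α ^ 2) 1)
    (c M₀ : ℝ) (hc : 0 ≤ c) (hM₀ : 0 ≤ M₀) (m : ℝ)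
    (G : ℕ → ℝ) (κ : ℕ → ℝ) (hκ : ∀ k, 0 < κ k)
    (γ : ℕ → ℝ) (hγ : ∀ k, 0 ≤ γ k) (Θ : ℕ → ℝ)
    (hrec : ∀ k, 1 ≤ k → Θ k = Θ (k - 1) -
      (γ k * (α ^ k * m + ∑ j ∈ Finset.Icc 1 k, (1 - α) * α ^ (k - j) * G j)) /
        (ε + Real.sqrt (β ^ k * M₀ + ∑ j ∈ Finset.Icc 1 k, κ k * β ^ (k - j) * (G j) ^ 2)))
    (n : ℕ) (hn : 1 ≤ n) (S : ℝ) (hS : 0 ≤ S)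
    (hS2 : β ^ n * M₀ + ∑ j ∈ Finset.Icc 1 n, κ n * β ^ (n - j) * (G j) ^ 2 = S ^ 2)
    (hΘ : |Θ (n - 1)| ≤ c + η⁻¹ * |G n|) :
    |Θ n| ≤ c + S / (η * Real.sqrt (κ n)) + γ n * α ^ n * |m| / (ε + S) +
      γ n * (1 - α) * Real.sqrt β / (Real.sqrt (κ n) * Real.sqrt (β - α ^ 2)) :=
  stmt18_general ε η hε hη α hα β hβ c M₀ hM₀ m G κ hκ γ hγ Θ hrec n hn S hS hS2 hΘ
end
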